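/- arXiv:1705.06194 — 2 statements merged into one kernel-verified Lean document; each statement's English description precedes it below -/
import Mathlib

section
/- Let X be a topological space satisfying the following condition (α): for every pairwise disjoint family {A_ξ : ξ ∈ Ξ} of meager subsets of X whose union is non-meager, there exist a subset Ξ' ⊆ Ξ and a nonempty open set U ⊆ X such that both ⋃_{ξ∈Ξ'} A_ξ and ⋃_{ξ∈Ξ∖Ξ'} A_ξ are everywhere of 2nd category in U. Let Y be a metric space and let f : X → Y be a function such that the preimage of every open subset of Y has the Baire property in X. Then f is continuous apart from a 1st category set: there exists a meager set D ⊆ X such that the restriction of f to X ∖ D (with the subspace topology) is continuous. -/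
universe u v

/-- A set has the Baire property if its symmetric difference with some open set
is meager. -/
def HasBaireProperty {X : Type u} [TopologicalSpace X] (s : Set X) : Prop :=
  ∃ U : Set X, IsOpen U ∧ IsMeagre (symmDiff s U)

/-!
A metric space has a σ-disjoint base (A. H. Stone): countably many families `B k` of pairwise
disjoint open sets. For fixed `k`, every union of the sets `E y = f ⁻¹' B k y` has the Baire
property, so `E y` differs from an open `G y` by a meagre set. Condition (α) makes these errors
uniformly meagre: were `⋃ y, E y \ G y` non-meagre, (α) would split it into two parts that are
both everywhere of second category on some open `U`, whereas an open set approximating the union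
of the `E y` of the second part separates the two parts modulo a meagre set. The same works for
`G y \ E y` once the overlaps of the `G y` are removed; these are meagre by Banach's category
theorem. Off the countable union `D` of all these errors every `E y` is relatively open, so `f` is
continuous on `Dᶜ`.
-/

open Set Function

section Meagre

variable {X : Type*} [TopologicalSpace X]

lemma IsMeagre.exists_isNowhereDense_seq {s : Set X} (hs : IsMeagre s) :
    ∃ F : ℕ → Set X, (∀ k, IsNowhereDense (F k)) ∧ s ⊆ ⋃ k, F k := by
  obtain ⟨S, hS, hSc, hsS⟩ := isMeagre_iff_countable_union_isNowhereDense.1 hs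
  rcases S.eq_empty_or_nonempty with rfl | hne
  · exact ⟨fun _ ↦ ∅, fun _ ↦ isNowhereDense_empty, by simpa using hsS⟩
  · obtain ⟨F, rfl⟩ := hSc.exists_eq_range hne
    exact ⟨F, fun k ↦ hS _ (mem_range_self k), by rwa [sUnion_range] at hsS⟩

theorem isMeagre_biUnion_of_pairwiseDisjoint {ι : Type*} {t : Set ι} {W M : ι → Set X}
    (hW : ∀ i ∈ t, IsOpen (W i)) (hWd : t.PairwiseDisjoint W) (hMW : ∀ i ∈ t, M i ⊆ W i)
    (hM : ∀ i ∈ t, IsMeagre (M i)) : IsMeagre (⋃ i ∈ t, M i) := by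
  choose! F hF hMF using fun i hi ↦ (hM i hi).exists_isNowhereDense_seq
  set N : ℕ → Set X := fun k ↦ ⋃ i ∈ t, F i k ∩ W i
  have hN : ∀ k, IsNowhereDense (N k) := by
    intro k
    refine isNowhereDense_iff_forall_notMem_nhds.2 fun x hx hcl ↦ ?_
    obtain ⟨i, hi, hxF, hxW⟩ := mem_iUnion₂.1 hx
    have hWN : W i ∩ N k ⊆ F i k := by
      rintro z ⟨hzW, hzN⟩
      obtain ⟨j, hj, hzF, hzW'⟩ := mem_iUnion₂.1 hzN
      rwa [hWd.elim_set hi hj z hzW hzW']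
    refine isNowhereDense_iff_forall_notMem_nhds.1 (hF i hi k) x hxF ?_
    exact Filter.mem_of_superset (Filter.inter_mem ((hW i hi).mem_nhds hxW) hcl)
      ((hW i hi).inter_closure.trans (closure_mono hWN))
  refine (isMeagre_iUnion fun k ↦ (hN k).isMeagre).mono fun x hx ↦ ?_
  obtain ⟨i, hi, hxM⟩ := mem_iUnion₂.1 hx
  obtain ⟨k, hk⟩ := mem_iUnion.1 (hMF i hi hxM)
  exact mem_iUnion.2 ⟨k, mem_biUnion hi ⟨hk, hMW i hi hxM⟩⟩

lemma IsOpen.isNowhereDense_closure_diff {T : Set X} (hT : IsOpen T) :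
    IsNowhereDense (closure T \ T) := by
  rw [← hT.frontier_eq, isClosed_frontier.isNowhereDense_iff, ← frontier_compl]
  exact interior_frontier hT.isClosed_compl

/-- Banach's category theorem. -/
theorem isMeagre_of_forall_exists_isOpen {s : Set X}
    (h : ∀ x ∈ s, ∃ U, IsOpen U ∧ x ∈ U ∧ IsMeagre (U ∩ s)) : IsMeagre s := by
  set 𝒰 : Set (Set X) := {U | IsOpen U ∧ U.Nonempty ∧ IsMeagre (U ∩ s)}
  -- With `δ = 0`, Vitali's covering lemma just provides a maximal disjoint subfamily of `𝒰`.
  obtain ⟨𝒟, h𝒟𝒰, h𝒟d, h𝒟max⟩ := Vitali.exists_disjoint_subfamily_covering_enlargement id 𝒰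
    (fun _ ↦ 0) 2 one_lt_two (fun _ _ ↦ le_rfl) 0 (fun _ _ ↦ le_rfl) fun _ hU ↦ hU.2.1
  set T := ⋃ U ∈ 𝒟, U
  have hT : IsOpen T := isOpen_biUnion fun U hU ↦ (h𝒟𝒰 hU).1
  have hsT : s ⊆ closure T := by
    intro x hx
    by_contra hxT
    obtain ⟨U, hU, hxU, hUs⟩ := h x hx
    obtain ⟨V, hV, ⟨z, hzU, hzV⟩, -⟩ := h𝒟max (U \ closure T)
      ⟨hU.sdiff isClosed_closure, ⟨x, hxU, hxT⟩, hUs.mono (inter_subset_inter_left _ sdiff_subset)⟩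
    exact hzU.2 (subset_closure (mem_biUnion hV hzV))
  have hTs : IsMeagre (⋃ U ∈ 𝒟, U ∩ s) :=
    isMeagre_biUnion_of_pairwiseDisjoint (fun U hU ↦ (h𝒟𝒰 hU).1) h𝒟d
      (fun _ _ ↦ inter_subset_left) fun U hU ↦ (h𝒟𝒰 hU).2.2
  refine (hTs.union hT.isNowhereDense_closure_diff.isMeagre).mono fun x hx ↦ ?_
  by_cases hxT : x ∈ T
  · obtain ⟨U, hU, hxU⟩ := mem_iUnion₂.1 hxT
    exact Or.inl (mem_biUnion hU ⟨hxU, hx⟩)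
  · exact Or.inr ⟨hsT hx, hxT⟩

end Meagre

namespace Metric

variable {Y : Type*} [PseudoMetricSpace Y]

/-- A. H. Stone's cells: the union of the `ρ`-balls around those points `c` for which `y` is the
first centre, in a fixed well-ordering of `Y`, whose `r`-ball contains `c`, and whose `2ρ`-ball
lies in that `r`-ball. Centres belonging to different `y` are then at least `2ρ` apart. -/
def stoneCell (r ρ : ℝ) (y : Y) : Set Y :=
  ⋃ c ∈ {c | (∀ y', WellOrderingRel y' y → c ∉ ball y' r) ∧ ball c (2 * ρ) ⊆ ball y r}, ball c ρ

lemma isOpen_stoneCell (r ρ : ℝ) (y : Y) : IsOpen (stoneCell r ρ y) :=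
  isOpen_biUnion fun _ _ ↦ isOpen_ball

lemma stoneCell_subset_ball {r ρ : ℝ} (hρ : 0 ≤ ρ) (y : Y) : stoneCell r ρ y ⊆ ball y r :=
  iUnion₂_subset fun _ hc ↦ (ball_subset_ball (by linarith)).trans hc.2

lemma pairwise_disjoint_stoneCell (r ρ : ℝ) : Pairwise (Disjoint on stoneCell (Y := Y) r ρ) := by
  have key : ∀ y₁ y₂ : Y, WellOrderingRel y₁ y₂ →
      Disjoint (stoneCell r ρ y₁) (stoneCell r ρ y₂) := by
    intro y₁ y₂ h
    simp only [stoneCell, disjoint_iUnion_left, disjoint_iUnion_right]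
    intro c₂ hc₂ c₁ hc₁
    refine ball_disjoint_ball (not_lt.1 fun hlt ↦ hc₂.1 y₁ h (hc₁.2 ?_))
    rw [mem_ball, dist_comm]
    linarith
  intro y₁ y₂ hne
  rcases trichotomous_of WellOrderingRel y₁ y₂ with h | h | h
  · exact key y₁ y₂ h
  · exact absurd h hne
  · exact (key y₂ y₁ h).symm

lemma exists_mem_stoneCell {r : ℝ} (hr : 0 < r) (x : Y) :
    ∃ (n : ℕ) (y : Y), x ∈ stoneCell r (1 / (n + 1)) y := by
  have hwf : WellFounded (WellOrderingRel (α := Y)) := IsWellFounded.wf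
  set S := {y | x ∈ ball y r}
  have hS : S.Nonempty := ⟨x, mem_ball_self hr⟩
  set y₀ := hwf.min S hS
  have hxy₀ : dist x y₀ < r := hwf.min_mem S hS
  obtain ⟨n, hn⟩ := exists_nat_one_div_lt (show 0 < (r - dist x y₀) / 2 by linarith)
  refine ⟨n, y₀, mem_biUnion ⟨fun y' hy' hxy' ↦ hwf.not_lt_min S hxy' hy', ?_⟩
    (mem_ball_self (by positivity))⟩
  intro z hz
  rw [mem_ball] at hz ⊢
  linarith [dist_triangle z x y₀]

variable (Y) in
theorem exists_sigmaDisjoint_basis :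
    ∃ B : ℕ × ℕ → Y → Set Y, (∀ k y, IsOpen (B k y)) ∧ (∀ k, Pairwise (Disjoint on B k)) ∧
      ∀ (x : Y) (ε : ℝ), 0 < ε → ∃ k y, x ∈ B k y ∧ B k y ⊆ ball x ε := by
  refine ⟨fun k ↦ stoneCell (1 / (k.1 + 1)) (1 / (k.2 + 1)), fun _ ↦ isOpen_stoneCell _ _,
    fun _ ↦ pairwise_disjoint_stoneCell _ _, fun x ε hε ↦ ?_⟩
  obtain ⟨m, hm⟩ := exists_nat_one_div_lt (half_pos hε)
  obtain ⟨n, y, hxy⟩ := exists_mem_stoneCell (Nat.one_div_pos_of_nat (n := m)) x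
  have hsub := stoneCell_subset_ball (r := 1 / (m + 1)) (Nat.one_div_pos_of_nat (n := n)).le y
  refine ⟨(m, n), y, hxy, fun z hz ↦ ?_⟩
  have := mem_ball.1 (hsub hxy)
  have := mem_ball.1 (hsub hz)
  rw [mem_ball]
  linarith [dist_triangle_right z x y]

end Metric

/-- Kunugi's condition (α), for families indexed by types in the universe of `X`. -/
def ConditionAlpha (X : Type u) [TopologicalSpace X] : Prop :=
  ∀ (Ξ : Type u) (A : Ξ → Set X), Pairwise (Function.onFun Disjoint A) →
    (∀ ξ, IsMeagre (A ξ)) → ¬ IsMeagre (⋃ ξ, A ξ) →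
    ∃ (Ξ' : Set Ξ) (U : Set X), IsOpen U ∧ U.Nonempty ∧
      (∀ x ∈ U, ∀ V : Set X, IsOpen V → x ∈ V →
        ¬ IsMeagre ((⋃ ξ ∈ Ξ', A ξ) ∩ V) ∧ ¬ IsMeagre ((⋃ ξ ∈ Ξ'ᶜ, A ξ) ∩ V))

section ConditionAlpha

variable {X : Type u} [TopologicalSpace X]

/-- Reindexing by the range of the family removes the universe restriction of (α). -/
theorem ConditionAlpha.exists_split {κ : Type*} (hα : ConditionAlpha X) {A : κ → Set X}
    (hA : Pairwise (Disjoint on A)) (hm : ∀ i, IsMeagre (A i)) (hnm : ¬ IsMeagre (⋃ i, A i)) :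
    ∃ (s : Set κ) (U : Set X), IsOpen U ∧ U.Nonempty ∧
      ∀ x ∈ U, ∀ V : Set X, IsOpen V → x ∈ V →
        ¬ IsMeagre ((⋃ i ∈ s, A i) ∩ V) ∧ ¬ IsMeagre ((⋃ i ∈ sᶜ, A i) ∩ V) := by
  have hg := rangeFactorization_surjective (f := A)
  have hunion (Ξ' : Set (range A)) :
      ⋃ i ∈ rangeFactorization A ⁻¹' Ξ', A i = ⋃ ξ ∈ Ξ', (ξ : Set X) :=
    hg.iUnion_comp fun ξ ↦ ⋃ _ : ξ ∈ Ξ', (ξ : Set X)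
  obtain ⟨Ξ', U, hU, hUne, hsep⟩ := hα (range A) Subtype.val
    (by rintro ⟨_, i, rfl⟩ ⟨_, j, rfl⟩ hne; exact hA fun hij ↦ hne (hij ▸ rfl))
    (by rintro ⟨_, i, rfl⟩; exact hm i) (by rwa [← hg.iUnion_comp])
  refine ⟨rangeFactorization A ⁻¹' Ξ', U, hU, hUne, ?_⟩
  simpa only [← preimage_compl, hunion] using hsep

theorem ConditionAlpha.isMeagre_iUnion {κ : Type*} (hα : ConditionAlpha X) {A S : κ → Set X}
    (hS : Pairwise (Disjoint on S)) (hAS : ∀ i, A i ⊆ S i) (hA : ∀ i, IsMeagre (A i))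
    (hBP : ∀ s : Set κ, HasBaireProperty (⋃ i ∈ s, S i)) : IsMeagre (⋃ i, A i) := by
  by_contra hnm
  obtain ⟨s, U, hU, ⟨x₀, hx₀⟩, hsep⟩ :=
    hα.exists_split (fun i j hij ↦ (hS hij).mono (hAS i) (hAS j)) hA hnm
  obtain ⟨H, hH, hHm⟩ := hBP sᶜ
  have hout : (⋃ i ∈ sᶜ, A i) \ H ⊆ symmDiff (⋃ i ∈ sᶜ, S i) H :=
    fun z hz ↦ Or.inl ⟨biUnion_mono subset_rfl (fun i _ ↦ hAS i) hz.1, hz.2⟩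
  have hin : (⋃ i ∈ s, A i) ∩ H ⊆ symmDiff (⋃ i ∈ sᶜ, S i) H := by
    rintro z ⟨hzA, hzH⟩
    obtain ⟨i, hi, hzi⟩ := mem_iUnion₂.1 hzA
    refine Or.inr ⟨hzH, fun hzS ↦ ?_⟩
    obtain ⟨j, hj, hzj⟩ := mem_iUnion₂.1 hzS
    exact disjoint_left.1 (hS (ne_of_mem_of_not_mem hi hj)) (hAS i hzi) hzj
  obtain ⟨x₁, hx₁U, hx₁H⟩ : (U ∩ H).Nonempty := by
    refine nonempty_iff_ne_empty.2 fun hUH ↦ (hsep x₀ hx₀ U hU hx₀).2 (hHm.mono ?_)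
    refine fun z hz ↦ hout ⟨hz.1, fun hzH ↦ ?_⟩
    exact (eq_empty_iff_forall_notMem.1 hUH) z ⟨hz.2, hzH⟩
  refine (hsep x₁ hx₁U (U ∩ H) (hU.inter hH) ⟨hx₁U, hx₁H⟩).1 (hHm.mono ?_)
  exact fun z hz ↦ hin ⟨hz.1, hz.2.2⟩

theorem ConditionAlpha.exists_isOpen_isMeagre_iUnion_symmDiff {κ : Type*}
    (hα : ConditionAlpha X) {E : κ → Set X} (hE : Pairwise (Disjoint on E))
    (hBP : ∀ s : Set κ, HasBaireProperty (⋃ i ∈ s, E i)) :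
    ∃ G : κ → Set X, (∀ i, IsOpen (G i)) ∧ IsMeagre (⋃ i, symmDiff (E i) (G i)) := by
  choose G hG hGm using fun i ↦ by simpa only [biUnion_singleton] using hBP {i}
  set Z := ⋃ (i) (j) (_ : i ≠ j), G i ∩ G j
  have hZ : IsMeagre Z := isMeagre_of_forall_exists_isOpen fun x hx ↦ by
    simp only [Z, mem_iUnion] at hx
    obtain ⟨i, j, hij, hx⟩ := hx
    refine ⟨G i ∩ G j, (hG i).inter (hG j), hx, ((hGm i).union (hGm j)).mono fun z hz ↦ ?_⟩
    by_cases hzi : z ∈ E i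
    · exact Or.inr (Or.inr ⟨hz.1.2, fun hzj ↦ disjoint_left.1 (hE hij) hzi hzj⟩)
    · exact Or.inl (Or.inr ⟨hz.1.1, hzi⟩)
  have h₁ : IsMeagre (⋃ i, E i \ G i) :=
    hα.isMeagre_iUnion hE (fun _ ↦ sdiff_subset) (fun i ↦ (hGm i).mono subset_union_left) hBP
  have h₂ : IsMeagre (⋃ i, (G i \ E i) \ Z) := by
    refine hα.isMeagre_iUnion (S := fun i ↦ G i \ Z) ?_
      (fun _ ↦ sdiff_subset_sdiff_left sdiff_subset)
      (fun i ↦ (hGm i).mono (sdiff_subset.trans subset_union_right)) fun s ↦ ?_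
    · refine fun i j hij ↦ disjoint_left.2 fun z hzi hzj ↦ hzi.2 ?_
      exact mem_iUnion₂.2 ⟨i, j, mem_iUnion.2 ⟨hij, hzi.1, hzj.1⟩⟩
    · refine ⟨⋃ i ∈ s, G i, isOpen_biUnion fun i _ ↦ hG i, hZ.mono ?_⟩
      rintro z (⟨hz, hz'⟩ | ⟨hz, hz'⟩)
      · exact absurd (biUnion_mono subset_rfl (fun _ _ ↦ sdiff_subset) hz) hz'
      · by_contra hzZ
        obtain ⟨i, hi, hzi⟩ := mem_iUnion₂.1 hz
        exact hz' (mem_biUnion hi ⟨hzi, hzZ⟩)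
  refine ⟨G, hG, ((h₁.union h₂).union hZ).mono fun z hz ↦ ?_⟩
  obtain ⟨i, hzi | hzi⟩ := mem_iUnion.1 hz
  · exact Or.inl (Or.inl (mem_iUnion.2 ⟨i, hzi⟩))
  · by_cases hzZ : z ∈ Z
    · exact Or.inr hzZ
    · exact Or.inl (Or.inr (mem_iUnion.2 ⟨i, hzi, hzZ⟩))

end ConditionAlpha

/-- **Kunugi's Theorem.** If `X` satisfies condition (α) and `f : X → Y` (with `Y`
metric) has the Baire property, then `f` is continuous apart from a 1st category
set. -/
theorem kunugi {X : Type u} [TopologicalSpace X] {Y : Type v} [MetricSpace Y]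
    (hα : ∀ (Ξ : Type u) (A : Ξ → Set X), Pairwise (Function.onFun Disjoint A) →
      (∀ ξ, IsMeagre (A ξ)) → ¬ IsMeagre (⋃ ξ, A ξ) →
      ∃ (Ξ' : Set Ξ) (U : Set X), IsOpen U ∧ U.Nonempty ∧
        (∀ x ∈ U, ∀ V : Set X, IsOpen V → x ∈ V →
          ¬ IsMeagre ((⋃ ξ ∈ Ξ', A ξ) ∩ V) ∧ ¬ IsMeagre ((⋃ ξ ∈ Ξ'ᶜ, A ξ) ∩ V)))
    (f : X → Y) (hf : ∀ V : Set Y, IsOpen V → HasBaireProperty (f ⁻¹' V)) :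
    ∃ D : Set X, IsMeagre D ∧ Continuous (Dᶜ.restrict f) := by
  obtain ⟨B, hB, hBd, hBbasis⟩ := Metric.exists_sigmaDisjoint_basis Y
  choose G hG hGm using fun k ↦ ConditionAlpha.exists_isOpen_isMeagre_iUnion_symmDiff hα
    (E := fun y ↦ f ⁻¹' B k y) (fun _ _ h ↦ (hBd k h).preimage f) fun s ↦ by
      simpa only [preimage_iUnion₂] using hf _ (isOpen_biUnion fun y _ ↦ hB k y)
  set D := ⋃ k, ⋃ y, symmDiff (f ⁻¹' B k y) (G k y)
  have hD : ∀ k y, ∀ x ∉ D, x ∈ G k y ↔ f x ∈ B k y := fun k y x hx ↦ by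
    by_contra h
    exact hx (mem_iUnion₂.2 ⟨k, y, by rw [mem_symmDiff]; tauto⟩)
  refine ⟨D, isMeagre_iUnion hGm, continuous_iff_continuousAt.2 fun x ↦ ?_⟩
  refine Metric.tendsto_nhds.2 fun ε hε ↦ ?_
  obtain ⟨k, y, hxB, hBε⟩ := hBbasis (f x) ε hε
  have hxG : x ∈ Subtype.val ⁻¹' G k y := (hD k y x x.2).2 hxB
  filter_upwards [((hG k y).preimage continuous_subtype_val).mem_nhds hxG] with z hz
  exact hBε ((hD k y z z.2).1 hz)
end

section
/- Let Y be a metric space and let ε > 0. Then there exists a family of sets Yⁿ_ξ ⊆ Y, indexed by n ∈ ℕ (n ≥ 1) and by ξ in some index set (depending on n), such that: (i) Y = ⋃_{n,ξ} Yⁿ_ξ; (ii) each Yⁿ_ξ is the set-theoretic difference of two open subsets of Y; (iii) for each n, any two distinct sets Yⁿ_ξ and Yⁿ_{ξ'} satisfy dist(x, x') > 1/n for all x ∈ Yⁿ_ξ and x' ∈ Yⁿ_{ξ'}; and (iv) the diameter of each Yⁿ_ξ is less than ε. -/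
/-!
Fix a well-order `≺` on `Y` and a radius `R = ε / 4`. For `n ≥ 1` and a centre `c`, let the cell
`Aₙ(c)` be the ball `B(c, R - 2/n)` minus the union of the balls `B(b, R - 1/n)` over `b ≺ c`.
Each cell is a difference of two open sets of diameter `≤ 2R < ε`. A point `x` lies in the cell
of the `≺`-least centre `c` with `dist x c < R`, once `2/n < R - dist x c`. Finally, if `c ≺ c'`,
a point of `Aₙ(c')` lies outside `B(c, R - 1/n)` while a point of `Aₙ(c)` lies in `B(c, R - 2/n)`,
so the two are more than `1/n` apart.
-/

open Metric Set

namespace Montgomery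

variable {Y : Type*} [MetricSpace Y] (r : Y → Y → Prop) (R : ℝ) (n : ℕ)

def cell (c : Y) : Set Y :=
  ball c (R - 2 / n) \ ⋃ b ∈ {b | r b c}, ball b (R - 1 / n)

variable {r R n}

theorem cell_subset_ball (c : Y) : cell r R n c ⊆ ball c R := fun _ hx =>
  ball_subset_ball (by linarith [show (0 : ℝ) ≤ 2 / n by positivity]) hx.1

theorem exists_open_sdiff_eq_cell (c : Y) :
    ∃ U V : Set Y, IsOpen U ∧ IsOpen V ∧ cell r R n c = U \ V :=
  ⟨_, _, isOpen_ball, isOpen_biUnion fun _ _ => isOpen_ball, rfl⟩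

theorem ediam_cell_le (c : Y) : ediam (cell r R n c) ≤ ENNReal.ofReal (2 * R) :=
  ediam_le_of_forall_dist_le fun x hx y hy => by
    have hxc := mem_ball.1 (cell_subset_ball c hx)
    have hyc := mem_ball'.1 (cell_subset_ball c hy)
    linarith [dist_triangle x c y]

theorem one_div_lt_dist_of_rel {c c' x y : Y} (hcc' : r c c') (hx : x ∈ cell r R n c)
    (hy : y ∈ cell r R n c') : 1 / (n : ℝ) < dist x y := by
  have hxc : dist x c < R - 2 / n := hx.1
  have hyc : R - 1 / n ≤ dist y c :=
    not_lt.1 fun h => hy.2 (mem_biUnion hcc' (mem_ball.2 h))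
  have h2 : (2 : ℝ) / n = 2 * (1 / n) := by ring
  linarith [dist_triangle y x c, dist_comm x y]

theorem one_div_lt_dist_of_ne [Std.Trichotomous r] {c c' x y : Y} (hcc' : c ≠ c')
    (hx : x ∈ cell r R n c) (hy : y ∈ cell r R n c') : 1 / (n : ℝ) < dist x y := by
  rcases trichotomous_of r c c' with h | h | h
  · exact one_div_lt_dist_of_rel h hx hy
  · exact absurd h hcc'
  · exact dist_comm x y ▸ one_div_lt_dist_of_rel h hy hx

theorem exists_mem_cell (hr : WellFounded r) (hR : 0 < R) (x : Y) :
    ∃ n, 1 ≤ n ∧ ∃ c, x ∈ cell r R n c := by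
  have hne : {c | dist x c < R}.Nonempty := ⟨x, by simpa using hR⟩
  set c := hr.min {c | dist x c < R} hne
  have hxc : dist x c < R := hr.min_mem _ hne
  obtain ⟨n, hn⟩ := exists_nat_gt (2 / (R - dist x c))
  have hgap : 0 < R - dist x c := by linarith
  have hn0 : (0 : ℝ) < n := lt_trans (by positivity) hn
  have h2n : 2 / (n : ℝ) < R - dist x c := by
    rwa [div_lt_comm₀ hn0 hgap]
  refine ⟨n, by exact_mod_cast hn0, c, mem_ball.2 (by linarith), ?_⟩
  simp only [mem_iUnion, mem_ball]
  rintro ⟨b, hbc, hxb⟩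
  exact hr.not_lt_min _ (show dist x b < R by linarith [show (0 : ℝ) < 1 / n by positivity]) hbc

end Montgomery

open Montgomery in
/-- **Montgomery-type decomposition (Appendix, Proposition 7.1).** Every metric
space `Y` is, for every `ε > 0`, the union over `n ≥ 1` of families `F n` of
sets, each set a difference of two open sets, of diameter `< ε`, with any two
distinct members of `F n` at mutual distance `> 1/n`. -/
theorem montgomery_decomposition {Y : Type*} [MetricSpace Y] (ε : ℝ) (hε : 0 < ε) :
    ∃ F : ℕ → Set (Set Y),
      (⋃ n ∈ {n : ℕ | 1 ≤ n}, ⋃ S ∈ F n, S) = Set.univ ∧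
      (∀ n : ℕ, 1 ≤ n → ∀ S ∈ F n, ∃ U V : Set Y, IsOpen U ∧ IsOpen V ∧ S = U \ V) ∧
      (∀ n : ℕ, 1 ≤ n → ∀ S ∈ F n, ∀ T ∈ F n, S ≠ T →
        ∀ x ∈ S, ∀ y ∈ T, dist x y > 1 / (n : ℝ)) ∧
      (∀ n : ℕ, 1 ≤ n → ∀ S ∈ F n, EMetric.diam S < ENNReal.ofReal ε) := by
  refine ⟨fun n => range (cell WellOrderingRel (ε / 4) n), ?_, ?_, ?_, ?_⟩
  · refine eq_univ_of_forall fun x => ?_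
    obtain ⟨n, hn, c, hx⟩ := exists_mem_cell (IsWellFounded.wf (r := WellOrderingRel)) (by positivity : 0 < ε / 4) x
    exact mem_biUnion (show n ∈ {n | 1 ≤ n} from hn) (mem_biUnion (mem_range_self c) hx)
  · rintro n - S ⟨c, rfl⟩
    exact exists_open_sdiff_eq_cell c
  · rintro n - S ⟨c, rfl⟩ T ⟨c', rfl⟩ hST x hx y hy
    exact one_div_lt_dist_of_ne (fun h => hST (congrArg _ h)) hx hy
  · rintro n - S ⟨c, rfl⟩
    refine (ediam_cell_le c).trans_lt ((ENNReal.ofReal_lt_ofReal_iff hε).2 ?_)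
    linarith
end
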